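/- Fix n ≥ 1 and let G_n be the weighted graph with vertex set {a_1,…,a_n, b_1,…,b_n} and weights w(a_i,b_j) = 1 for all i ≠ j and weight 0 on all other unordered pairs (including each pair {a_i,b_i}). Then every hierarchical clustering tree T on G_n in which, for each i, the leaves a_i and b_i are the two children of a common internal node satisfies val(T) = (4/3)·(n³ − n). -/

import Mathlib

open Finset

/-- A hierarchical clustering tree: a rooted binary tree with leaves labelled by vertices. -/
inductive HC (V : Type*) where
  | leaf : V → HC V
  | node : HC V → HC V → HC V

namespace HC

variable {V : Type*}

/-- The list of leaf labels of a tree, left to right. -/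
def leafList : HC V → List V
  | .leaf v => [v]
  | .node l r => leafList l ++ leafList r

/-- The set of leaf labels of a tree. -/
def leaves [DecidableEq V] (t : HC V) : Finset V :=
  t.leafList.toFinset

/-- `t.cluster i j` is the leaf set of the subtree of `t` rooted at the least common
ancestor of the leaves `i` and `j` (i.e. `leaves(T[i ∨ j])`). -/
def cluster [DecidableEq V] : HC V → V → V → Finset V
  | .leaf v, _, _ => {v}
  | .node l r, i, j =>
    if i ∈ l.leaves ∧ j ∈ l.leaves then l.cluster i j
    else if i ∈ r.leaves ∧ j ∈ r.leaves then r.cluster i j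
    else (HC.node l r).leaves

/-- `t` is a hierarchical clustering tree on the whole vertex type `V`:
its leaves are in bijection with `V`. -/
def IsTreeOn [Fintype V] [DecidableEq V] (t : HC V) : Prop :=
  t.leafList.Nodup ∧ t.leaves = Finset.univ

/-- Sum of `f A B` over all internal nodes of the tree, where `A`, `B` are the
leaf sets of the two children of the internal node. -/
def internalSum [DecidableEq V] (f : Finset V → Finset V → ℝ) : HC V → ℝ
  | .leaf _ => 0
  | .node l r => f l.leaves r.leaves + internalSum f l + internalSum f r

/-- The list of all subtrees of a tree. -/
def subtreesList : HC V → List (HC V)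
  | .leaf v => [.leaf v]
  | .node l r => .node l r :: (subtreesList l ++ subtreesList r)

/-- Dasgupta's cost: sum over unordered pairs `{i,j}` of distinct vertices of
`w i j * |leaves(T[i ∨ j])|`. -/
noncomputable def cost [Fintype V] [DecidableEq V] (w : V → V → ℝ) (t : HC V) : ℝ :=
  (1 / 2) * ∑ p ∈ Finset.univ.offDiag, w p.1 p.2 * ((t.cluster p.1 p.2).card : ℝ)

/-- Moseley–Wang revenue: sum over unordered pairs `{i,j}` of distinct vertices of
`w i j * |nonleaves(T[i ∨ j])|`. -/
noncomputable def rev [Fintype V] [DecidableEq V] (w : V → V → ℝ) (t : HC V) : ℝ :=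
  (1 / 2) * ∑ p ∈ Finset.univ.offDiag,
    w p.1 p.2 * ((Finset.univ \ t.cluster p.1 p.2).card : ℝ)

/-- Cohen-Addad et al.'s value: the same formula as cost, used for dissimilarity weights. -/
noncomputable def val [Fintype V] [DecidableEq V] (w : V → V → ℝ) (t : HC V) : ℝ :=
  cost w t

end HC

/-- The total weight `W`: the sum of `w i j` over unordered pairs of distinct vertices. -/
noncomputable def totalWeight {V : Type*} [Fintype V] [DecidableEq V] (w : V → V → ℝ) : ℝ :=
  (1 / 2) * ∑ p ∈ Finset.univ.offDiag, w p.1 p.2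

/-- The merge cost of merging disjoint clusters `A` and `B`. -/
noncomputable def mergeCost {V : Type*} [Fintype V] [DecidableEq V] (w : V → V → ℝ) (A B : Finset V) : ℝ :=
  (B.card : ℝ) * ∑ a ∈ A, ∑ c ∈ Finset.univ \ (A ∪ B), w a c
    + (A.card : ℝ) * ∑ b ∈ B, ∑ c ∈ Finset.univ \ (A ∪ B), w b c

/-- The merge revenue of merging disjoint clusters `A` and `B`. -/
noncomputable def mergeRev {V : Type*} [Fintype V] (w : V → V → ℝ) (A B : Finset V) : ℝ :=
  ((Fintype.card V : ℝ) - (A.card : ℝ) - (B.card : ℝ)) * ∑ a ∈ A, ∑ b ∈ B, w a b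

/-- The average linkage between disjoint nonempty clusters `A` and `B`. -/
noncomputable def avgLinkage {V : Type*} (w : V → V → ℝ) (A B : Finset V) : ℝ :=
  (1 / ((A.card : ℝ) * (B.card : ℝ))) * ∑ a ∈ A, ∑ b ∈ B, w a b

/-- A matching encoded as an involution `f : V → V`: the matched pairs are the pairs
`{v, f v}` with `f v ≠ v`; its weight is the sum of weights of matched pairs. -/
noncomputable def matchingWeight {V : Type*} [Fintype V] [DecidableEq V] (w : V → V → ℝ) (f : V → V) : ℝ :=
  (1 / 2) * ∑ v ∈ Finset.univ.filter (fun v => f v ≠ v), w v (f v)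

/-- A perfect matching encoded as a fixed-point-free involution. -/
def IsPerfectMatching {V : Type*} (f : V → V) : Prop :=
  (∀ v, f (f v) = v) ∧ ∀ v, f v ≠ v


/-- The weighted graph `G_n`: vertices `a_1,...,a_n` (left) and `b_1,...,b_n` (right),
`w(a_i, b_j) = 1` for `i ≠ j`, and weight `0` on all other pairs. -/
noncomputable def wG (n : ℕ) : (Fin n ⊕ Fin n) → (Fin n ⊕ Fin n) → ℝ :=
  fun x y =>
    match x, y with
    | Sum.inl i, Sum.inr j => if i = j then 0 else 1
    | Sum.inr i, Sum.inl j => if i = j then 0 else 1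
    | _, _ => 0

/-- For each `i`, the leaves `a_i` and `b_i` are the two children of a common internal node
of `t` (in either order). -/
def pairCond (n : ℕ) (t : HC (Fin n ⊕ Fin n)) : Prop :=
  ∀ i : Fin n,
    HC.node (HC.leaf (Sum.inl i)) (HC.leaf (Sum.inr i)) ∈ t.subtreesList ∨
    HC.node (HC.leaf (Sum.inr i)) (HC.leaf (Sum.inl i)) ∈ t.subtreesList

/-!
Charging each pair of vertices to the internal node that separates it, `val T` is half the sum,
over internal nodes with children `A` and `B`, of `|A ∪ B|` times the symmetrised weight between
`A` and `B`. If every `{a_i, b_i}` is a cherry, each other internal node splits into two disjoint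
unions of such pairs, and between two such sets `G_n` carries exactly `|A| |B| / 2` edges. The
value then only depends on the sizes and telescopes to `((2n)³ - 4 · 2n) / 6 = 4/3 (n³ - n)`.
-/

namespace HC

variable {V : Type*}

section Leaves

variable [DecidableEq V]

lemma leaves_leaf (v : V) : (leaf v).leaves = {v} := rfl

lemma leaves_node (l r : HC V) : (node l r).leaves = l.leaves ∪ r.leaves := by
  simp [leaves, leafList]

lemma nodup_node {l r : HC V} (h : (node l r).leafList.Nodup) :
    l.leafList.Nodup ∧ r.leafList.Nodup ∧ Disjoint l.leaves r.leaves := by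
  rw [leafList, List.nodup_append] at h
  exact ⟨h.1, h.2.1, List.disjoint_toFinset_iff_disjoint.2 fun a ha hb => h.2.2 a ha a hb rfl⟩

lemma card_leaves_node {l r : HC V} (h : (node l r).leafList.Nodup) :
    #(node l r).leaves = #l.leaves + #r.leaves := by
  rw [leaves_node, card_union_of_disjoint (nodup_node h).2.2]

lemma leaves_subset_of_mem_subtreesList {s t : HC V} (h : s ∈ t.subtreesList) :
    s.leaves ⊆ t.leaves := by
  induction t with
  | leaf v =>
    rw [subtreesList, List.mem_singleton] at h
    rw [h]
  | node l r ihl ihr =>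
    rw [subtreesList, List.mem_cons, List.mem_append] at h
    rcases h with rfl | h | h
    · rfl
    · exact (ihl h).trans (leaves_node l r ▸ subset_union_left)
    · exact (ihr h).trans (leaves_node l r ▸ subset_union_right)

end Leaves

section Cluster

variable [DecidableEq V] {l r : HC V} {x y : V}

lemma cluster_node_of_mem_left (hx : x ∈ l.leaves) (hy : y ∈ l.leaves) :
    (node l r).cluster x y = l.cluster x y :=
  if_pos ⟨hx, hy⟩

lemma cluster_node_of_mem_right (hlr : Disjoint l.leaves r.leaves) (hx : x ∈ r.leaves)
    (hy : y ∈ r.leaves) : (node l r).cluster x y = r.cluster x y := by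
  rw [cluster, if_neg fun h => disjoint_left.1 hlr h.1 hx, if_pos ⟨hx, hy⟩]

lemma cluster_node_of_mem_left_right (hlr : Disjoint l.leaves r.leaves) (hx : x ∈ l.leaves)
    (hy : y ∈ r.leaves) : (node l r).cluster x y = (node l r).leaves := by
  rw [cluster, if_neg fun h => disjoint_left.1 hlr h.2 hy,
    if_neg fun h => disjoint_left.1 hlr hx h.1]

lemma cluster_node_of_mem_right_left (hlr : Disjoint l.leaves r.leaves) (hx : x ∈ r.leaves)
    (hy : y ∈ l.leaves) : (node l r).cluster x y = (node l r).leaves := by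
  rw [cluster, if_neg fun h => disjoint_left.1 hlr h.1 hx,
    if_neg fun h => disjoint_left.1 hlr hy h.2]

end Cluster

theorem sum_offDiag_cluster_eq_internalSum [DecidableEq V] (w : V → V → ℝ) {t : HC V}
    (ht : t.leafList.Nodup) :
    ∑ p ∈ t.leaves.offDiag, w p.1 p.2 * #(t.cluster p.1 p.2)
      = t.internalSum fun A B => #(A ∪ B) * ∑ a ∈ A, ∑ b ∈ B, (w a b + w b a) := by
  induction t with
  | leaf v => simp [leaves_leaf, internalSum]
  | node l r ihl ihr =>
    obtain ⟨hl, hr, hlr⟩ := nodup_node ht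
    have hleft : ∑ p ∈ l.leaves.offDiag, w p.1 p.2 * #((node l r).cluster p.1 p.2)
        = ∑ p ∈ l.leaves.offDiag, w p.1 p.2 * #(l.cluster p.1 p.2) :=
      sum_congr rfl fun p hp => by
        obtain ⟨hx, hy, -⟩ := mem_offDiag.1 hp
        rw [cluster_node_of_mem_left hx hy]
    have hright : ∑ p ∈ r.leaves.offDiag, w p.1 p.2 * #((node l r).cluster p.1 p.2)
        = ∑ p ∈ r.leaves.offDiag, w p.1 p.2 * #(r.cluster p.1 p.2) :=
      sum_congr rfl fun p hp => by
        obtain ⟨hx, hy, -⟩ := mem_offDiag.1 hp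
        rw [cluster_node_of_mem_right hlr hx hy]
    have hlr' : ∑ p ∈ l.leaves ×ˢ r.leaves, w p.1 p.2 * #((node l r).cluster p.1 p.2)
        = ∑ p ∈ l.leaves ×ˢ r.leaves, w p.1 p.2 * #(node l r).leaves :=
      sum_congr rfl fun p hp => by
        rw [cluster_node_of_mem_left_right hlr (mem_product.1 hp).1 (mem_product.1 hp).2]
    have hrl' : ∑ p ∈ r.leaves ×ˢ l.leaves, w p.1 p.2 * #((node l r).cluster p.1 p.2)
        = ∑ p ∈ r.leaves ×ˢ l.leaves, w p.1 p.2 * #(node l r).leaves :=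
      sum_congr rfl fun p hp => by
        rw [cluster_node_of_mem_right_left hlr (mem_product.1 hp).1 (mem_product.1 hp).2]
    rw [leaves_node, offDiag_union hlr, sum_union, sum_union, sum_union, hleft, hright, hlr', hrl',
      ihl hl, ihr hr, internalSum, ← leaves_node, sum_product, sum_product,
      sum_comm (s := r.leaves)]
    · simp only [← sum_mul, sum_add_distrib]
      ring
    all_goals
      have := disjoint_left.1 hlr
      simp only [disjoint_left, mem_union, mem_offDiag, mem_product]
      grind

def HasCherry (t : HC V) (x y : V) : Prop :=
  node (leaf x) (leaf y) ∈ t.subtreesList ∨ node (leaf y) (leaf x) ∈ t.subtreesList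

lemma HasCherry.symm {t : HC V} {x y : V} (h : t.HasCherry x y) : t.HasCherry y x :=
  Or.symm h

lemma not_hasCherry_leaf (v x y : V) : ¬ (leaf v).HasCherry x y := by
  simp [HasCherry, subtreesList]

lemma HasCherry.of_node {l r : HC V} {x y : V} (h : (node l r).HasCherry x y) :
    (l = leaf x ∧ r = leaf y ∨ l = leaf y ∧ r = leaf x) ∨
      l.HasCherry x y ∨ r.HasCherry x y := by
  simp only [HasCherry, subtreesList, List.mem_cons, List.mem_append, node.injEq] at h ⊢
  grind

lemma HasCherry.mem_leaves [DecidableEq V] {t : HC V} {x y : V} (h : t.HasCherry x y) :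
    x ∈ t.leaves := by
  rcases h with h | h <;>
    exact leaves_subset_of_mem_subtreesList h (by simp [leaves_node, leaves_leaf])

def PairedBy [DecidableEq V] (σ : V → V) (t : HC V) : Prop :=
  ∀ x ∈ t.leaves, t.HasCherry x (σ x)

lemma PairedBy.map_mem [DecidableEq V] {σ : V → V} {t : HC V} (ht : t.PairedBy σ) {x : V}
    (hx : x ∈ t.leaves) : σ x ∈ t.leaves :=
  (ht x hx).symm.mem_leaves

lemma not_pairedBy_leaf [DecidableEq V] (σ : V → V) (v : V) : ¬ (leaf v).PairedBy σ :=
  fun h => not_hasCherry_leaf v v (σ v) (h v (by simp [leaves_leaf]))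

theorem PairedBy.node_cases [DecidableEq V] {σ : V → V} (hσ : Function.Involutive σ)
    {l r : HC V} (hnd : (node l r).leafList.Nodup) (h : (node l r).PairedBy σ) :
    (∃ x, l = leaf x ∧ r = leaf (σ x)) ∨ l.PairedBy σ ∧ r.PairedBy σ := by
  by_cases hroot : ∃ x, l = leaf x ∧ r = leaf (σ x)
  · exact Or.inl hroot
  have hlr := disjoint_left.1 (nodup_node hnd).2.2
  have hchild : ∀ x ∈ (node l r).leaves, l.HasCherry x (σ x) ∨ r.HasCherry x (σ x) := by
    intro x hx
    rcases (h x hx).of_node with (⟨hl, hr⟩ | ⟨hl, hr⟩) | hc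
    · exact absurd ⟨x, hl, hr⟩ hroot
    · exact absurd ⟨σ x, hl, (hσ x).symm ▸ hr⟩ hroot
    · exact hc
  refine Or.inr ⟨fun x hx => ?_, fun x hx => ?_⟩
  · have := hchild x (leaves_node l r ▸ mem_union_left _ hx)
    exact this.resolve_right fun hc => hlr hx hc.mem_leaves
  · have := hchild x (leaves_node l r ▸ mem_union_right _ hx)
    exact this.resolve_left fun hc => hlr hc.mem_leaves hx

end HC

section GraphGn

variable {n : ℕ}

lemma wG_comm (x y : Fin n ⊕ Fin n) : wG n x y = wG n y x := by
  rcases x with i | i <;> rcases y with j | j <;> simp [wG, eq_comm]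

lemma wG_swap_self (x : Fin n ⊕ Fin n) : wG n x x.swap = 0 := by
  rcases x with i | i <;> simp [wG]

/-- Of the two vertices `y`, `y.swap` exactly one lies on the other side from `x`, and it is
not the partner of `x`. -/
lemma wG_add_wG_swap {x y : Fin n ⊕ Fin n} (hxy : x ≠ y) (hxy' : x ≠ y.swap) :
    wG n x y + wG n x y.swap = 1 := by
  rcases x with i | i <;> rcases y with j | j <;> simp_all [wG]

lemma two_mul_sum_wG {B : Finset (Fin n ⊕ Fin n)} (hB : ∀ b ∈ B, b.swap ∈ B)
    {x : Fin n ⊕ Fin n} (hx : x ∉ B) : 2 * ∑ b ∈ B, wG n x b = #B := by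
  have hswap : ∑ b ∈ B, wG n x b = ∑ b ∈ B, wG n x b.swap :=
    sum_nbij' Sum.swap Sum.swap hB hB (fun b _ => b.swap_swap) (fun b _ => b.swap_swap)
      fun b _ => by rw [Sum.swap_swap]
  calc 2 * ∑ b ∈ B, wG n x b = ∑ b ∈ B, (wG n x b + wG n x b.swap) := by
        rw [sum_add_distrib, ← hswap, two_mul]
    _ = ∑ _b ∈ B, (1 : ℝ) := sum_congr rfl fun b hb =>
        wG_add_wG_swap (ne_of_mem_of_not_mem hb hx).symm (ne_of_mem_of_not_mem (hB b hb) hx).symm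
    _ = #B := by simp

lemma sum_sum_wG_add_wG {A B : Finset (Fin n ⊕ Fin n)} (hAB : Disjoint A B)
    (hB : ∀ b ∈ B, b.swap ∈ B) :
    ∑ a ∈ A, ∑ b ∈ B, (wG n a b + wG n b a) = #A * #B := by
  calc ∑ a ∈ A, ∑ b ∈ B, (wG n a b + wG n b a)
        = ∑ a ∈ A, 2 * ∑ b ∈ B, wG n a b := by
        refine sum_congr rfl fun a _ => ?_
        rw [mul_sum]
        exact sum_congr rfl fun b _ => by rw [wG_comm b a, two_mul]
    _ = #A * #B := by
        rw [sum_congr rfl fun a ha => two_mul_sum_wG hB (disjoint_left.1 hAB ha), sum_const,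
          nsmul_eq_mul]

/-- The identity `f(a + b) = f a + f b + (a + b) a b` for `f m = (m³ - 4m)/3`, with `f 2 = 0`,
drives the induction. -/
theorem internalSum_wG_of_pairedBy_swap {t : HC (Fin n ⊕ Fin n)} (hnd : t.leafList.Nodup)
    (ht : t.PairedBy Sum.swap) :
    3 * t.internalSum (fun A B => #(A ∪ B) * ∑ a ∈ A, ∑ b ∈ B, (wG n a b + wG n b a))
      = (#t.leaves : ℝ) ^ 3 - 4 * #t.leaves := by
  induction t with
  | leaf v => exact absurd ht (HC.not_pairedBy_leaf _ v)
  | node l r ihl ihr =>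
    obtain ⟨hl, hr, hlr⟩ := HC.nodup_node hnd
    rw [HC.card_leaves_node hnd, HC.internalSum]
    rcases ht.node_cases Sum.swap_swap hnd with ⟨x, rfl, rfl⟩ | ⟨htl, htr⟩
    · norm_num [HC.internalSum, HC.leaves_leaf, wG_swap_self, wG_comm x.swap]
    · rw [sum_sum_wG_add_wG hlr fun _ => htr.map_mem, card_union_of_disjoint hlr]
      push_cast
      linear_combination ihl hl htl + ihr hr htr

theorem stmt12_general (n : ℕ)
    (t : HC (Fin n ⊕ Fin n)) (ht : t.IsTreeOn) (hp : pairCond n t) :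
    HC.val (wG n) t = (4 / 3) * ((n : ℝ) ^ 3 - (n : ℝ)) := by
  obtain ⟨hnd, huniv⟩ := ht
  have hpaired : t.PairedBy Sum.swap := by
    rintro (i | i) -
    · exact hp i
    · exact (hp i).symm
  have hcard : #t.leaves = 2 * n := by simp [huniv, two_mul]
  have hcount := internalSum_wG_of_pairedBy_swap hnd hpaired
  rw [hcard] at hcount
  rw [HC.val, HC.cost, ← huniv, HC.sum_offDiag_cluster_eq_internalSum _ hnd]
  push_cast at hcount
  linear_combination hcount / 6

/-- On the graph `G_n`, every hierarchical clustering tree in which, for each `i`, the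
leaves `a_i` and `b_i` are the two children of a common internal node has value
`(4/3)·(n³ − n)`. -/
theorem stmt12 (n : ℕ) (hn : 1 ≤ n)
    (t : HC (Fin n ⊕ Fin n)) (ht : t.IsTreeOn) (hp : pairCond n t) :
    HC.val (wG n) t = (4 / 3) * ((n : ℝ) ^ 3 - (n : ℝ)) :=
  stmt12_general n t ht hp
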